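/- Let n > k ≥ 2 be integers with n ≥ 3, let x ∈ ℝ^n satisfy ∑_{j=1}^n x_j = 0, and fix i ∈ {1, …, n}. Let A be a uniformly random k-element subset of {1, …, n}, and let y ∈ ℝ^n be obtained from x by setting y_j = (1/k)∑_{a∈A} x_a for j ∈ A and y_j = x_j otherwise. Then E[y_i²] = (1 − k/n + 1/(nk) − 3(k−1)/(kn(n−1)) + 2(k−1)(k−2)/(nk(n−1)(n−2))) · x_i² + ((k−1)/(kn(n−1)) − (k−1)(k−2)/(kn(n−1)(n−2))) · ∑_{j=1}^n x_j². -/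
import Mathlib


open Finset

noncomputable section

/-- One averaging step: replace all coordinates in `A` by their average. -/
def avgStep {n : ℕ} (k : ℕ) (A : Finset (Fin n)) (x : Fin n → ℝ) : Fin n → ℝ :=
  fun j => if j ∈ A then (∑ a ∈ A, x a) / k else x j

lemma count_superset {α : Type*} [DecidableEq α] (s T : Finset α) (hT : T ⊆ s) (k : ℕ)
    (hk : T.card ≤ k) :
    ((powersetCard k s).filter fun A => T ⊆ A).card = (s.card - T.card).choose (k - T.card) := by
  have h := card_powersetCard (k - T.card) (s \ T)
  rw [card_sdiff_of_subset hT] at h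
  rw [← h]
  apply card_bij (fun A _ => A \ T)
  · intro A hA
    simp only [mem_filter, mem_powersetCard] at hA
    obtain ⟨⟨hAs, hAc⟩, hTA⟩ := hA
    rw [mem_powersetCard]
    exact ⟨sdiff_subset_sdiff hAs Subset.rfl, by rw [card_sdiff_of_subset hTA, hAc]⟩
  · intro A hA A' hA' hEq
    simp only [mem_filter] at hA hA'
    rw [← sdiff_union_of_subset hA.2, ← sdiff_union_of_subset hA'.2, hEq]
  · intro B hB
    rw [mem_powersetCard] at hB
    have hdisj : Disjoint B T := (subset_sdiff.mp hB.1).2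
    refine ⟨B ∪ T, ?_, ?_⟩
    · simp only [mem_filter, mem_powersetCard]
      refine ⟨⟨union_subset (hB.1.trans sdiff_subset) hT, ?_⟩, subset_union_right⟩
      rw [card_union_of_disjoint hdisj, hB.2]
      omega
    · rw [union_sdiff_cancel_right hdisj]

set_option maxHeartbeats 2000000 in
/-- Exact formula for the expected square of a single coordinate after averaging a
uniformly random `k`-subset of the coordinates of a mean-zero vector. -/
theorem averaging_expected_single_coordinate_sq
    (n k : ℕ) (hk : 2 ≤ k) (hn : k < n) (hn3 : 3 ≤ n)
    (x : Fin n → ℝ) (hx : ∑ j, x j = 0) (i : Fin n) :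
    (∑ A ∈ powersetCard k (univ : Finset (Fin n)), (avgStep k A x i) ^ 2)
        / (n.choose k : ℝ)
      = (1 - (k : ℝ) / n + 1 / (n * k) - 3 * ((k : ℝ) - 1) / (k * n * (n - 1))
            + 2 * ((k : ℝ) - 1) * ((k : ℝ) - 2) / (n * k * (n - 1) * (n - 2))) * (x i) ^ 2
        + (((k : ℝ) - 1) / (k * n * (n - 1))
            - ((k : ℝ) - 1) * ((k : ℝ) - 2) / (k * n * (n - 1) * (n - 2))) * ∑ j, (x j) ^ 2 := by
  classical
  set P := powersetCard k (univ : Finset (Fin n)) with hPdef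
  set N : ℝ := (n.choose k : ℝ) with hNdef
  set c1 : ℝ := ((n-1).choose (k-1) : ℝ) with hc1def
  set c2 : ℝ := ((n-2).choose (k-2) : ℝ) with hc2def
  set c3 : ℝ := (if 3 ≤ k then (((n-3).choose (k-3) : ℕ) : ℝ) else 0) with hc3def
  set B : ℝ := ((n-1).choose k : ℝ) with hBdef
  set Q : ℝ := ∑ j, (x j)^2 with hQdef
  set F := P.filter (fun A => i ∈ A) with hFdef
  -- counting for pairs
  have hcard : ∀ (T : Finset (Fin n)), T.card ≤ k →
      ((P.filter fun A => T ⊆ A).card : ℝ) = ((n - T.card).choose (k - T.card) : ℝ) := by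
    intro T hT
    rw [hPdef, count_superset _ T (subset_univ T) k hT, card_univ, Fintype.card_fin]
  have hcnt : ∀ a b : Fin n,
      ((P.filter fun A => ({i,a,b} : Finset (Fin n)) ⊆ A).card : ℝ)
        = c3 + (c2 - c3) * ((if a = i then (1:ℝ) else 0) + (if b = i then (1:ℝ) else 0)
              + (if a = b then (1:ℝ) else 0))
          + (c1 - 3*c2 + 2*c3) * (if a = i ∧ b = i then (1:ℝ) else 0) := by
    intro a b
    by_cases ha : a = i <;> by_cases hb : b = i
    · have h1 : ({i,a,b} : Finset (Fin n)) = {i} := by rw [ha, hb]; simp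
      rw [h1, hcard ({i} : Finset (Fin n)) (by rw [card_singleton]; omega)]
      rw [card_singleton, if_pos ha, if_pos hb, if_pos (ha.trans hb.symm), if_pos ⟨ha, hb⟩,
        ← hc1def]
      ring
    · have h1 : ({i,a,b} : Finset (Fin n)) = {i,b} := by rw [ha]; simp
      have hc : ({i,b} : Finset (Fin n)).card = 2 := by
        rw [card_insert_of_notMem (by simp only [mem_singleton]; exact fun h => hb h.symm), card_singleton]
      rw [h1, hcard _ (by rw [hc]; omega), hc, ← hc2def]
      rw [if_pos ha, if_neg hb, if_neg (fun h : a = b => hb (h.symm.trans ha)),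
        if_neg (fun h : a = i ∧ b = i => hb h.2)]
      ring
    · have h1 : ({i,a,b} : Finset (Fin n)) = {i,a} := by rw [hb]; ext y; simp; tauto
      have hc : ({i,a} : Finset (Fin n)).card = 2 := by
        rw [card_insert_of_notMem (by simp only [mem_singleton]; exact fun h => ha h.symm), card_singleton]
      rw [h1, hcard _ (by rw [hc]; omega), hc, ← hc2def]
      rw [if_neg ha, if_pos hb, if_neg (fun h : a = b => ha (h.trans hb)),
        if_neg (fun h : a = i ∧ b = i => ha h.1)]
      ring
    · by_cases hab : a = b
      · have h1 : ({i,a,b} : Finset (Fin n)) = {i,a} := by rw [← hab]; simp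
        have hc : ({i,a} : Finset (Fin n)).card = 2 := by
          rw [card_insert_of_notMem (by simp only [mem_singleton]; exact fun h => ha h.symm), card_singleton]
        rw [h1, hcard _ (by rw [hc]; omega), hc, ← hc2def]
        rw [if_neg ha, if_neg hb, if_pos hab, if_neg (fun h : a = i ∧ b = i => ha h.1)]
        ring
      · have hc : ({i,a,b} : Finset (Fin n)).card = 3 := by
          rw [card_insert_of_notMem (by simp only [mem_insert, mem_singleton]; rintro (h | h); exacts [ha h.symm, hb h.symm]),
            card_insert_of_notMem (by simp [hab]), card_singleton]
        by_cases hk3 : 3 ≤ k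
        · rw [hcard _ (by rw [hc]; omega), hc]
          rw [if_neg ha, if_neg hb, if_neg hab, if_neg (fun h : a = i ∧ b = i => ha h.1),
            hc3def, if_pos hk3]
          ring
        · have hempty : P.filter (fun A => ({i,a,b} : Finset (Fin n)) ⊆ A) = ∅ := by
            rw [filter_eq_empty_iff]
            intro A hA hsub
            rw [hPdef, mem_powersetCard] at hA
            have := card_le_card hsub
            rw [hc, hA.2] at this
            omega
          rw [hempty]
          rw [card_empty, Nat.cast_zero, if_neg ha, if_neg hb, if_neg hab,
            if_neg (fun h : a = i ∧ b = i => ha h.1), hc3def, if_neg hk3]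
          ring
  -- the sum over subsets containing i
  have hS : ∑ A ∈ F, (∑ a ∈ A, x a)^2
      = (c1 - 3*c2 + 2*c3) * (x i * x i) + (c2 - c3) * Q := by
    have step1 : ∀ A ∈ F, (∑ a ∈ A, x a)^2
        = ∑ a : Fin n, ∑ b : Fin n, (if a ∈ A then x a else 0) * (if b ∈ A then x b else 0) := by
      intro A hA
      rw [sq, ← Fintype.sum_ite_mem A x, Finset.sum_mul_sum]
    rw [Finset.sum_congr rfl step1, Finset.sum_comm]
    have step2 : ∀ a : Fin n, ∑ A ∈ F, ∑ b : Fin n,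
        (if a ∈ A then x a else 0) * (if b ∈ A then x b else 0)
      = ∑ b : Fin n, ∑ A ∈ F, (if a ∈ A then x a else 0) * (if b ∈ A then x b else 0) :=
      fun a => Finset.sum_comm
    rw [Finset.sum_congr rfl fun a _ => step2 a]
    have step3 : ∀ a b : Fin n,
        (∑ A ∈ F, (if a ∈ A then x a else 0) * (if b ∈ A then x b else 0))
        = ((P.filter fun A => ({i,a,b} : Finset (Fin n)) ⊆ A).card : ℝ) * (x a * x b) := by
      intro a b
      have h1 : ∀ A : Finset (Fin n), (if a ∈ A then x a else 0) * (if b ∈ A then x b else 0)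
          = if a ∈ A ∧ b ∈ A then x a * x b else 0 := by
        intro A; by_cases h1 : a ∈ A <;> by_cases h2 : b ∈ A <;> simp [h1, h2]
      simp_rw [h1]
      rw [← Finset.sum_filter, Finset.sum_const, nsmul_eq_mul]
      have h2 : F.filter (fun A => a ∈ A ∧ b ∈ A)
          = P.filter fun A => ({i,a,b} : Finset (Fin n)) ⊆ A := by
        rw [hFdef, filter_filter]
        apply filter_congr
        intro A _
        simp [insert_subset_iff, and_assoc]
      rw [h2]
    rw [Finset.sum_congr rfl fun a _ => Finset.sum_congr rfl fun b _ => step3 a b]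
    have expand : ∀ a b : Fin n,
        ((P.filter fun A => ({i,a,b} : Finset (Fin n)) ⊆ A).card : ℝ) * (x a * x b)
        = c3 * (x a * x b)
          + (c2 - c3) * ((if a = i then x a else 0) * x b)
          + (c2 - c3) * (x a * (if b = i then x b else 0))
          + (c2 - c3) * (if a = b then x a * x b else 0)
          + (c1 - 3*c2 + 2*c3) * ((if a = i then x a else 0) * (if b = i then x b else 0)) := by
      intro a b
      rw [hcnt a b]
      split_ifs <;> first | ring1 | (rename_i p q r s; exact (s ⟨p, q⟩).elim) | (rename_i p q r s; exact (p s.1).elim) | (rename_i p q r s; exact (q s.2).elim)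
    rw [Finset.sum_congr rfl fun a _ => Finset.sum_congr rfl fun b _ => expand a b]
    simp only [Finset.sum_add_distrib, ← Finset.mul_sum, ← Finset.sum_mul,
      Finset.sum_ite_eq, Finset.sum_ite_eq', mem_univ, if_true, hx,
      mul_zero, zero_mul, Finset.sum_const_zero, add_zero, zero_add]
    rw [hQdef]
    simp only [sq]
    ring
  -- split the full sum according to whether i ∈ A
  have hsplit : ∑ A ∈ P, (avgStep k A x i)^2
      = (∑ A ∈ F, (∑ a ∈ A, x a)^2) / (k:ℝ)^2 + B * (x i)^2 := by
    rw [← Finset.sum_filter_add_sum_filter_not P (fun A => i ∈ A)]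
    congr 1
    · rw [Finset.sum_div]
      refine Finset.sum_congr rfl fun A hA => ?_
      rw [mem_filter] at hA
      simp only [avgStep]
      rw [if_pos hA.2, div_pow]
    · have h1 : ∀ A ∈ P.filter (fun A => ¬ i ∈ A), (avgStep k A x i)^2 = (x i)^2 := by
        intro A hA
        rw [mem_filter] at hA
        simp only [avgStep]
        rw [if_neg hA.2]
      rw [Finset.sum_congr rfl h1, Finset.sum_const, nsmul_eq_mul]
      have h2 : P.filter (fun A => ¬ i ∈ A) = powersetCard k ((univ : Finset (Fin n)).erase i) := by
        ext A
        simp only [hPdef, mem_filter, mem_powersetCard, subset_erase, subset_univ, true_and]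
        tauto
      rw [h2, card_powersetCard, card_erase_of_mem (mem_univ i), card_univ, Fintype.card_fin,
        hBdef]
  rw [hsplit, hS]
  -- final algebra
  obtain ⟨l, rfl⟩ : ∃ l, k = l + 2 := ⟨k - 2, by omega⟩
  obtain ⟨m, rfl⟩ : ∃ m, n = m + 3 := ⟨n - 3, by omega⟩
  have hc1' : c1 = (((m+2).choose (l+1) : ℕ) : ℝ) := by
    rw [hc1def, show m+3-1 = m+2 from by omega, show l+2-1 = l+1 from by omega]
  have hc2' : c2 = (((m+1).choose l : ℕ) : ℝ) := by
    rw [hc2def, show m+3-2 = m+1 from by omega, show l+2-2 = l from by omega]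
  have hB' : B = (((m+2).choose (l+2) : ℕ) : ℝ) := by
    rw [hBdef, show m+3-1 = m+2 from by omega]
  have e1 : ((m:ℝ)+3) * c1 = N * ((l:ℝ)+2) := by
    rw [hc1', hNdef]
    exact_mod_cast Nat.add_one_mul_choose_eq (m+2) (l+1)
  have e2 : ((m:ℝ)+2) * c2 = c1 * ((l:ℝ)+1) := by
    rw [hc1', hc2']
    exact_mod_cast Nat.add_one_mul_choose_eq (m+1) l
  have e3 : ((m:ℝ)+1) * c3 = c2 * (l:ℝ) := by
    cases l with
    | zero =>
      rw [hc3def, if_neg (by omega)]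
      push_cast
      ring
    | succ j =>
      rw [hc3def, if_pos (by omega), hc2',
        show m+3-3 = m from by omega, show j+1+2-3 = j from by omega]
      push_cast
      exact_mod_cast Nat.add_one_mul_choose_eq m j
  have e4 : N = B + c1 := by
    rw [hNdef, hB', hc1']
    rw [show (m+3).choose (l+2) = (m+2).choose (l+1) + (m+2).choose (l+2)
      from Nat.choose_succ_succ' (m+2) (l+1)]
    push_cast
    ring
  have hN0 : N ≠ 0 := by
    rw [hNdef]
    exact_mod_cast (Nat.choose_pos (show l+2 ≤ m+3 by omega)).ne'
  have d1 : ((m:ℝ) + 3) ≠ 0 := by positivity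
  have d2 : ((l:ℝ) + 2) ≠ 0 := by positivity
  have d3 : ((m:ℝ) + 2) ≠ 0 := by positivity
  have d4 : ((m:ℝ) + 1) ≠ 0 := by positivity
  have f1 : c1 = N * ((l:ℝ)+2) / ((m:ℝ)+3) := by
    rw [eq_div_iff d1]; linarith [e1]
  have f2 : c2 = c1 * ((l:ℝ)+1) / ((m:ℝ)+2) := by
    rw [eq_div_iff d3]; linarith [e2]
  have f3 : c3 = c2 * (l:ℝ) / ((m:ℝ)+1) := by
    rw [eq_div_iff d4]; linarith [e3]
  have fB : B = N - c1 := by linarith [e4]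
  rw [fB, f3, f2, f1, hQdef]
  push_cast
  have g1 : ((m:ℝ) + 3) - 1 = (m:ℝ) + 2 := by ring
  have g2 : ((m:ℝ) + 3) - 2 = (m:ℝ) + 1 := by ring
  rw [g1, g2]
  field_simp
  ring


end
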